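/- arXiv:2509.06352 — 2 statements merged into one kernel-verified Lean document; each statement's English description precedes it below -/
import Mathlib

section
/- (Comparability of arch amplitudes for piecewise constant coefficients.) Let c be piecewise constant as follows: 0 = h_{−1} < h₀ < ⋯ < h_N = H and c(y) = c_{j+1} ∈ [c_m, c_M] for y ∈ (h_j, h_{j+1}), j = −1,…,N−1, with total variation V := Σ_{j=0}^{N−1}|c_{j+1} − c_j|. Fix ε > 0, μ > 0 and λ ≥ (c_M + ε)μ², and let u be a nontrivial Dirichlet solution of the reduced problem, so that on each piece u(y) = β_j sin( μ√(p_{j+1}/c_{j+1}) (y − γ_j) ) for y ∈ (h_j, h_{j+1}), where p_{j+1} := λ/μ² − c_{j+1} and β_j, γ_j are constants. Then β_j ≠ 0 for every j, and with κ := (1/c_m)·max(1, (c_M − ε)/ε) one has β_{−1}² e^{−κV} ≤ β_q² ≤ β_{−1}² e^{κV} for every q ∈ {0,1,…,N−1}; in particular the ratio of any two of the β_j² is at most e^{2κV}. -/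
open MeasureTheory Set Filter Topology

noncomputable section

/-- `u` (with flux `v = c·u'` and weak derivative `g = u'`) is a solution of the reduced
problem `(c u')' + (λ - c μ²) u = 0` on the interval `[a, b]`:
`u` is absolutely continuous with derivative `g ∈ L²`, the flux `v` agrees a.e. with `c·g`,
and `v` is absolutely continuous with derivative `(c μ² - λ)·u`. -/
def IsReducedSolutionOn (a b : ℝ) (c : ℝ → ℝ) (μ lam : ℝ) (u v g : ℝ → ℝ) : Prop :=
  IntervalIntegrable g volume a b ∧
  IntervalIntegrable (fun t => g t ^ 2) volume a b ∧
  (∀ y ∈ Set.Icc a b, u y = u a + ∫ t in a..y, g t) ∧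
  (∀ᵐ y ∂volume.restrict (Set.Ioo a b), v y = c y * g y) ∧
  IntervalIntegrable (fun t => (c t * μ ^ 2 - lam) * u t) volume a b ∧
  (∀ y ∈ Set.Icc a b, v y = v a + ∫ t in a..y, (c t * μ ^ 2 - lam) * u t)

/-- A coefficient on `[0, H]`: measurable and bounded between `cm` and `cM`. -/
def IsCoeff (H cm cM : ℝ) (c : ℝ → ℝ) : Prop :=
  Measurable c ∧ ∀ y ∈ Set.Icc (0 : ℝ) H, cm ≤ c y ∧ c y ≤ cM

/-! On a piece where `c ≡ k`, write `ω = μ √((λ/μ² - k)/k)`; differentiating the sine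
representation gives `(k ω)² u² + (c u')² = (k ω β)²`, and `(k ω)² = μ² k (λ/μ² - k) =: P(k)`.
Both `u` and the flux `c u'` are continuous across an interface, so there
`β_j² = u² + (c u')² / P(c_j)` and `β_{j+1}² = u² + (c u')² / P(c_{j+1})`, whence
`β_{j+1}² ≤ max 1 (P(c_j) / P(c_{j+1})) · β_j²`. Because `λ/μ² ≥ c_M + ε`, the function
`log (k (λ/μ² - k))` is `κ`-Lipschitz on `[c_m, c_M]`, which bounds that factor by
`exp (κ |c_{j+1} - c_j|)`; chaining over the interfaces produces the total variation. Finally,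
if `β_0 = 0` then every `β_j` vanishes and the energy identity forces `u ≡ 0`. -/

open Real

lemma continuousOn_of_eq_add_integral {f F : ℝ → ℝ} {a b : ℝ}
    (hF : IntervalIntegrable F volume a b) (hf : ∀ y ∈ Icc a b, f y = f a + ∫ t in a..y, F t) :
    ContinuousOn f (Icc a b) :=
  (continuousOn_const.add ((intervalIntegral.continuousOn_primitive_interval' hF
    left_mem_uIcc).mono Icc_subset_uIcc)).congr hf

lemma eq_add_integral_of_mem_Icc {f F : ℝ → ℝ} {a b a' : ℝ}
    (hF : IntervalIntegrable F volume a b) (hf : ∀ y ∈ Icc a b, f y = f a + ∫ t in a..y, F t)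
    (ha' : a' ∈ Icc a b) : ∀ y ∈ Icc a' b, f y = f a' + ∫ t in a'..y, F t := by
  intro y hy
  have hy' : y ∈ Icc a b := ⟨ha'.1.trans hy.1, hy.2⟩
  have hint : ∀ z ∈ Icc a b, IntervalIntegrable F volume a z := fun z hz =>
    hF.mono_set (uIcc_subset_uIcc left_mem_uIcc (Icc_subset_uIcc hz))
  rw [hf y hy', hf a' ha', ← intervalIntegral.integral_interval_sub_left (hint y hy')
    (hint a' ha')]
  ring

lemma sq_add_sq_of_hasDerivAt_of_eqOn_sin {f : ℝ → ℝ} {s : Set ℝ} {f' β ω γ y : ℝ}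
    (hs : s ∈ 𝓝 y) (hf : ∀ z ∈ s, f z = β * sin (ω * (z - γ))) (hd : HasDerivAt f f' y) :
    (ω * f y) ^ 2 + f' ^ 2 = (ω * β) ^ 2 := by
  have hlin : HasDerivAt (fun z => ω * (z - γ)) ω y := by
    simpa using ((hasDerivAt_id y).sub_const γ).const_mul ω
  have hsin := ((hasDerivAt_sin _).comp y hlin).const_mul β
  rw [hd.unique (hsin.congr_of_eventuallyEq (eventuallyEq_of_mem hs hf)), hf y (mem_of_mem_nhds hs)]
  linear_combination (ω * β) ^ 2 * sin_sq_add_cos_sq (ω * (y - γ))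

namespace IsReducedSolutionOn

variable {a b : ℝ} {c : ℝ → ℝ} {μ lam : ℝ} {u v g : ℝ → ℝ}

lemma mono (hsol : IsReducedSolutionOn a b c μ lam u v g) {a' b' : ℝ} (ha : a ≤ a')
    (hab : a' ≤ b') (hb : b' ≤ b) : IsReducedSolutionOn a' b' c μ lam u v g := by
  obtain ⟨hg, hg2, hu, hvg, hF, hv⟩ := hsol
  have ha' : a' ∈ Icc a b := ⟨ha, hab.trans hb⟩
  have hsub : uIcc a' b' ⊆ uIcc a b :=
    uIcc_subset_uIcc (Icc_subset_uIcc ha') (Icc_subset_uIcc ⟨ha.trans hab, hb⟩)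
  have hIcc : Icc a' b' ⊆ Icc a' b := Icc_subset_Icc_right hb
  exact ⟨hg.mono_set hsub, hg2.mono_set hsub,
    fun y hy => eq_add_integral_of_mem_Icc hg hu ha' y (hIcc hy),
    ae_restrict_of_ae_restrict_of_subset (Ioo_subset_Ioo ha hb) hvg, hF.mono_set hsub,
    fun y hy => eq_add_integral_of_mem_Icc hF hv ha' y (hIcc hy)⟩

lemma continuousOn (hsol : IsReducedSolutionOn a b c μ lam u v g) :
    ContinuousOn u (Icc a b) :=
  continuousOn_of_eq_add_integral hsol.1 hsol.2.2.1

lemma continuousOn_flux (hsol : IsReducedSolutionOn a b c μ lam u v g) :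
    ContinuousOn v (Icc a b) :=
  continuousOn_of_eq_add_integral hsol.2.2.2.2.1 hsol.2.2.2.2.2

lemma hasDerivAt_of_eqOn_const (hsol : IsReducedSolutionOn a b c μ lam u v g) {k : ℝ}
    (hk : k ≠ 0) (hc : ∀ y ∈ Ioo a b, c y = k) {y : ℝ} (hy : y ∈ Ioo a b) :
    HasDerivAt u (v y / k) y := by
  have hv := hsol.continuousOn_flux
  have hrep : ∀ z ∈ Ioo a b, u z = u a + ∫ t in a..z, v t / k := by
    intro z hz
    rw [hsol.2.2.1 z (Ioo_subset_Icc_self hz)]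
    congr 1
    refine intervalIntegral.integral_congr_ae ?_
    filter_upwards [(ae_restrict_iff' measurableSet_Ioo).mp hsol.2.2.2.1] with t ht htz
    rw [uIoc_of_le hz.1.le] at htz
    have htab : t ∈ Ioo a b := ⟨htz.1, htz.2.trans_lt hz.2⟩
    rw [ht htab, hc t htab]
    field_simp
  have hint : IntervalIntegrable (fun t => v t / k) volume a y :=
    ((hv.mono (uIcc_of_le hy.1.le ▸ Icc_subset_Icc_right hy.2.le)).div_const k).intervalIntegrable
  have hmeas : StronglyMeasurableAtFilter (fun t => v t / k) (𝓝 y) volume :=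
    ((hv.mono Ioo_subset_Icc_self).div_const k).stronglyMeasurableAtFilter isOpen_Ioo y hy
  have hcont : ContinuousAt (fun t => v t / k) y :=
    (hv.continuousAt (Icc_mem_nhds hy.1 hy.2)).div_const k
  exact ((intervalIntegral.integral_hasDerivAt_right hint hmeas hcont).const_add
    (u a)).congr_of_eventuallyEq (eventuallyEq_of_mem (Ioo_mem_nhds hy.1 hy.2) hrep)

lemma energy_eq_of_eqOn_sin (hsol : IsReducedSolutionOn a b c μ lam u v g) (hab : a < b)
    {k β ω γ : ℝ} (hk : k ≠ 0) (hc : ∀ y ∈ Ioo a b, c y = k)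
    (hu : ∀ y ∈ Ioo a b, u y = β * sin (ω * (y - γ))) :
    ∀ y ∈ Icc a b, (k * ω) ^ 2 * u y ^ 2 + v y ^ 2 = (k * ω) ^ 2 * β ^ 2 := by
  have hopen : EqOn (fun y => (k * ω) ^ 2 * u y ^ 2 + v y ^ 2) (fun _ => (k * ω) ^ 2 * β ^ 2)
      (Ioo a b) := by
    intro y hy
    have h := sq_add_sq_of_hasDerivAt_of_eqOn_sin (Ioo_mem_nhds hy.1 hy.2) hu
      (hsol.hasDerivAt_of_eqOn_const hk hc hy)
    field_simp at h
    linear_combination h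
  refine hopen.of_subset_closure ?_ continuousOn_const Ioo_subset_Icc_self
    (closure_Ioo hab.ne).superset
  exact (continuousOn_const.mul (hsol.continuousOn.pow 2)).add (hsol.continuousOn_flux.pow 2)

lemma energy_eq_of_eqOn_sin_sqrt (hsol : IsReducedSolutionOn a b c μ lam u v g) {p q : ℝ}
    (hap : a ≤ p) (hpq : p < q) (hqb : q ≤ b) {k β γ : ℝ} (hk : 0 < k) (hkL : k ≤ lam / μ ^ 2)
    (hc : ∀ y ∈ Ioo p q, c y = k)
    (hu : ∀ y ∈ Ioo p q, u y = β * sin (μ * √((lam / μ ^ 2 - k) / k) * (y - γ))) :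
    ∀ y ∈ Icc p q, μ ^ 2 * (k * (lam / μ ^ 2 - k)) * u y ^ 2 + v y ^ 2 =
      μ ^ 2 * (k * (lam / μ ^ 2 - k)) * β ^ 2 := by
  have hω : (k * (μ * √((lam / μ ^ 2 - k) / k))) ^ 2 = μ ^ 2 * (k * (lam / μ ^ 2 - k)) := by
    rw [mul_pow, mul_pow, sq_sqrt (div_nonneg (sub_nonneg.2 hkL) hk.le)]
    field_simp
  simpa only [hω] using
    (hsol.mono hap hpq.le hqb).energy_eq_of_eqOn_sin hpq hk.ne' hc hu

end IsReducedSolutionOn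

lemma mul_sub_pos_of_mem_Icc {cm cM L t : ℝ} (hcm : 0 < cm) (hL : cM < L)
    (ht : t ∈ Icc cm cM) : 0 < t * (L - t) :=
  mul_pos (hcm.trans_le ht.1) (sub_pos.2 (ht.2.trans_lt hL))

lemma abs_inv_sub_inv_sub_le {cm cM ε L t : ℝ} (hcm : 0 < cm) (hε : 0 < ε) (hL : cM + ε ≤ L)
    (ht : t ∈ Icc cm cM) : |t⁻¹ - (L - t)⁻¹| ≤ 1 / cm * max 1 ((cM - ε) / ε) := by
  set M := max 1 ((cM - ε) / ε)
  have hM1 : 1 ≤ M := le_max_left _ _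
  have hMε : cM - ε ≤ M * ε := (div_le_iff₀ hε).1 (le_max_right _ _)
  have hLt : ε ≤ L - t := by linarith [ht.2]
  have hden : 0 < t * (L - t) := mul_sub_pos_of_mem_Icc hcm (by linarith) ht
  rw [inv_sub_inv (hcm.trans_le ht.1).ne' (hε.trans_le hLt).ne', abs_div, abs_of_pos hden,
    div_le_iff₀ hden, show 1 / cm * M * (t * (L - t)) = M * (L - t) * (t / cm) by ring, abs_le]
  have htcm : 0 ≤ t / cm - 1 := sub_nonneg.2 ((one_le_div hcm).2 ht.1)
  have hMLt : 0 ≤ M * (L - t) := mul_nonneg (zero_le_one.trans hM1) (hε.le.trans hLt)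
  constructor
  · nlinarith [ht.2, mul_nonneg hMLt htcm, mul_le_mul_of_nonneg_left hLt (zero_le_one.trans hM1)]
  · nlinarith [mul_nonneg hMLt htcm, mul_nonneg (sub_nonneg.2 hM1) (hε.le.trans hLt)]

lemma mul_sub_le_exp_mul_mul_sub {cm cM ε L x y : ℝ} (hcm : 0 < cm) (hε : 0 < ε)
    (hL : cM + ε ≤ L) (hx : x ∈ Icc cm cM) (hy : y ∈ Icc cm cM) :
    x * (L - x) ≤ exp (1 / cm * max 1 ((cM - ε) / ε) * |x - y|) * (y * (L - y)) := by
  have hpos : ∀ t ∈ Icc cm cM, 0 < t ∧ 0 < L - t := fun t ht =>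
    ⟨hcm.trans_le ht.1, by linarith [ht.2]⟩
  have hderiv : ∀ t ∈ Icc cm cM,
      HasDerivWithinAt (fun t => log t + log (L - t)) (t⁻¹ - (L - t)⁻¹) (Icc cm cM) t := by
    intro t ht
    have h := (hasDerivAt_log (hpos t ht).1.ne').add
      (((hasDerivAt_id t).const_sub L).log (hpos t ht).2.ne')
    refine (h.congr_deriv ?_).hasDerivWithinAt
    simp [sub_eq_add_neg, neg_div]
  have hlip := (convex_Icc cm cM).norm_image_sub_le_of_norm_hasDerivWithin_le hderiv
    (fun t ht => abs_inv_sub_inv_sub_le hcm hε hL ht) hy hx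
  rw [Real.norm_eq_abs, Real.norm_eq_abs] at hlip
  obtain ⟨hx0, hxL⟩ := hpos x hx
  obtain ⟨hy0, hyL⟩ := hpos y hy
  calc x * (L - x) = exp ((log x + log (L - x)) - (log y + log (L - y))) * (y * (L - y)) := by
        rw [exp_sub, exp_add, exp_add, exp_log hx0, exp_log hxL, exp_log hy0, exp_log hyL]
        field_simp
    _ ≤ _ := by gcongr; exact (le_abs_self _).trans hlip

lemma sq_le_mul_sq_of_energy_eq {P Q R w v β β' : ℝ} (hP : 0 < P) (hQ : 0 < Q) (hR : 1 ≤ R)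
    (hPQ : P ≤ R * Q) (hβ : P * w ^ 2 + v ^ 2 = P * β ^ 2)
    (hβ' : Q * w ^ 2 + v ^ 2 = Q * β' ^ 2) : β' ^ 2 ≤ R * β ^ 2 := by
  refine le_of_mul_le_mul_left ?_ (mul_pos hP hQ)
  calc P * Q * β' ^ 2 = P * (Q * w ^ 2 + v ^ 2) := by rw [hβ']; ring
    _ ≤ R * Q * (P * w ^ 2 + v ^ 2) := by
      nlinarith [mul_nonneg (mul_nonneg (sub_nonneg.2 hR) (mul_pos hP hQ).le) (sq_nonneg w),
        mul_nonneg (sub_nonneg.2 hPQ) (sq_nonneg v)]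
    _ = P * Q * (R * β ^ 2) := by rw [hβ]; ring

lemma sq_le_sq_mul_exp_of_energy_eq {cm cM ε L μ x y w v β β' : ℝ} (hcm : 0 < cm)
    (hε : 0 < ε) (hL : cM + ε ≤ L) (hx : x ∈ Icc cm cM) (hy : y ∈ Icc cm cM) (hμ : μ ≠ 0)
    (hβ : μ ^ 2 * (x * (L - x)) * w ^ 2 + v ^ 2 = μ ^ 2 * (x * (L - x)) * β ^ 2)
    (hβ' : μ ^ 2 * (y * (L - y)) * w ^ 2 + v ^ 2 = μ ^ 2 * (y * (L - y)) * β' ^ 2) :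
    β' ^ 2 ≤ β ^ 2 * exp (1 / cm * max 1 ((cM - ε) / ε) * |x - y|) := by
  have hpos : ∀ t ∈ Icc cm cM, 0 < μ ^ 2 * (t * (L - t)) := fun t ht =>
    mul_pos (by positivity) (mul_sub_pos_of_mem_Icc hcm (by linarith) ht)
  rw [mul_comm]
  refine sq_le_mul_sq_of_energy_eq (hpos x hx) (hpos y hy) (one_le_exp (by positivity)) ?_ hβ hβ'
  have := mul_le_mul_of_nonneg_left (mul_sub_le_exp_mul_mul_sub hcm hε hL hx hy) (sq_nonneg μ)
  linarith

lemma le_mul_exp_sum_range_of_succ_le {b d : ℕ → ℝ} {q : ℕ}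
    (h : ∀ j < q, b (j + 1) ≤ b j * exp (d j)) : b q ≤ b 0 * exp (∑ j ∈ Finset.range q, d j) := by
  induction q with
  | zero => simp
  | succ q ih =>
    rw [Finset.sum_range_succ, exp_add, ← mul_assoc]
    exact (h q q.lt_succ_self).trans
      (mul_le_mul_of_nonneg_right (ih fun j hj => h j (hj.trans q.lt_succ_self)) (exp_nonneg _))

lemma le_mul_exp_sum_range_of_le_succ {b d : ℕ → ℝ} {q : ℕ}
    (h : ∀ j < q, b j ≤ b (j + 1) * exp (d j)) : b 0 ≤ b q * exp (∑ j ∈ Finset.range q, d j) := by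
  induction q with
  | zero => simp
  | succ q ih =>
    rw [Finset.sum_range_succ, exp_add, mul_comm (exp _), ← mul_assoc]
    exact (ih fun j hj => h j (hj.trans q.lt_succ_self)).trans
      (mul_le_mul_of_nonneg_right (h q q.lt_succ_self) (exp_nonneg _))

lemma le_mul_exp_sum_range_of_steps {b d : ℕ → ℝ} {N : ℕ} (hb : ∀ j, 0 ≤ b j)
    (hd : ∀ j, 0 ≤ d j)
    (hstep : ∀ j < N, b (j + 1) ≤ b j * exp (d j) ∧ b j ≤ b (j + 1) * exp (d j)) {q : ℕ}
    (hq : q ≤ N) :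
    b q ≤ b 0 * exp (∑ j ∈ Finset.range N, d j) ∧ b 0 ≤ b q * exp (∑ j ∈ Finset.range N, d j) := by
  have hsum : ∑ j ∈ Finset.range q, d j ≤ ∑ j ∈ Finset.range N, d j :=
    Finset.sum_le_sum_of_subset_of_nonneg (Finset.range_subset_range.2 hq) fun j _ _ => hd j
  exact ⟨(le_mul_exp_sum_range_of_succ_le fun j hj => (hstep j (hj.trans_le hq)).1).trans
      (by gcongr; exact hb 0),
    (le_mul_exp_sum_range_of_le_succ fun j hj => (hstep j (hj.trans_le hq)).2).trans
      (by gcongr; exact hb q)⟩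

lemma exists_mem_Icc_succ_of_mem_Icc {α : Type*} [LinearOrder α] {h : ℕ → α} {y : α} :
    ∀ {N : ℕ}, y ∈ Icc (h 0) (h (N + 1)) → ∃ j ≤ N, y ∈ Icc (h j) (h (j + 1))
  | 0, hy => ⟨0, le_rfl, hy⟩
  | N + 1, hy => by
    rcases le_or_gt y (h (N + 1)) with hyN | hyN
    · obtain ⟨j, hj, hyj⟩ := exists_mem_Icc_succ_of_mem_Icc ⟨hy.1, hyN⟩
      exact ⟨j, hj.trans N.le_succ, hyj⟩
    · exact ⟨N + 1, le_rfl, hyN.le, hy.2⟩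

lemma sq_comparable_of_forall_le_mul_exp {β : ℕ → ℝ} {N : ℕ} {K : ℝ} (hβ0 : β 0 ≠ 0)
    (hbound : ∀ q ≤ N, β q ^ 2 ≤ β 0 ^ 2 * exp K ∧ β 0 ^ 2 ≤ β q ^ 2 * exp K) :
    (∀ j ≤ N, β j ≠ 0) ∧
    (∀ q ≤ N, β 0 ^ 2 * exp (-K) ≤ β q ^ 2 ∧ β q ^ 2 ≤ β 0 ^ 2 * exp K) ∧
    (∀ q ≤ N, ∀ q' ≤ N, β q ^ 2 ≤ β q' ^ 2 * exp (2 * K)) := by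
  refine ⟨fun j hj hβj => hβ0 ?_, fun q hq => ⟨?_, (hbound q hq).1⟩, fun q hq q' hq' => ?_⟩
  · simpa [hβj] using (hbound j hj).2
  · rw [exp_neg, ← div_eq_mul_inv, div_le_iff₀ (exp_pos _)]
    exact (hbound q hq).2
  · calc β q ^ 2 ≤ β 0 ^ 2 * exp K := (hbound q hq).1
      _ ≤ β q' ^ 2 * exp K * exp K := by gcongr; exact (hbound q' hq').2
      _ = β q' ^ 2 * exp (2 * K) := by rw [mul_assoc, ← exp_add, two_mul]

theorem stmt16_general (cm cM H : ℝ) (hcm : 0 < cm)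
    (ε μ lam : ℝ) (hε : 0 < ε) (hμ : 0 < μ) (hlam : (cM + ε) * μ ^ 2 ≤ lam)
    (N : ℕ) (h : ℕ → ℝ) (cv : ℕ → ℝ) (c : ℝ → ℝ)
    (hh0 : h 0 = 0) (hhN : h (N + 1) = H)
    (hmono : ∀ j ≤ N, h j < h (j + 1))
    (hcv : ∀ j ≤ N, cv j ∈ Set.Icc cm cM)
    (hstep : ∀ j ≤ N, ∀ y ∈ Set.Ioo (h j) (h (j + 1)), c y = cv j)
    (u v g : ℝ → ℝ) (hsol : IsReducedSolutionOn 0 H c μ lam u v g)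
    (hnt : ∃ y ∈ Set.Icc (0 : ℝ) H, u y ≠ 0)
    (β γ : ℕ → ℝ)
    (hrep : ∀ j ≤ N, ∀ y ∈ Set.Ioo (h j) (h (j + 1)),
      u y = β j * Real.sin (μ * Real.sqrt ((lam / μ ^ 2 - cv j) / cv j) * (y - γ j))) :
    (∀ j ≤ N, β j ≠ 0) ∧
    (∀ q ≤ N,
      β 0 ^ 2 * Real.exp (-(1 / cm * max 1 ((cM - ε) / ε)) *
          (∑ j ∈ Finset.range N, |cv (j + 1) - cv j|)) ≤ β q ^ 2 ∧
      β q ^ 2 ≤ β 0 ^ 2 * Real.exp ((1 / cm * max 1 ((cM - ε) / ε)) *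
          (∑ j ∈ Finset.range N, |cv (j + 1) - cv j|))) ∧
    (∀ q ≤ N, ∀ q' ≤ N,
      β q ^ 2 ≤ β q' ^ 2 * Real.exp (2 * (1 / cm * max 1 ((cM - ε) / ε)) *
          (∑ j ∈ Finset.range N, |cv (j + 1) - cv j|))) := by
  set κ := 1 / cm * max 1 ((cM - ε) / ε)
  set S := ∑ j ∈ Finset.range N, |cv (j + 1) - cv j|
  set L := lam / μ ^ 2
  have hL : cM + ε ≤ L := (le_div_iff₀ (by positivity)).2 hlam
  have hhIic : MonotoneOn h (Iic (N + 1)) := monotoneOn_of_le_succ ordConnected_Iic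
    fun j _ _ hj => (hmono j (by simpa using hj)).le
  have henergy : ∀ j ≤ N, ∀ y ∈ Icc (h j) (h (j + 1)),
      μ ^ 2 * (cv j * (L - cv j)) * u y ^ 2 + v y ^ 2 = μ ^ 2 * (cv j * (L - cv j)) * β j ^ 2 :=
    fun j hj => hsol.energy_eq_of_eqOn_sin_sqrt
      (hh0 ▸ hhIic (by simp) (by simp; omega) j.zero_le) (hmono j hj)
      (hhN ▸ hhIic (by simp; omega) (by simp) (by omega)) (hcm.trans_le (hcv j hj).1)
      (by linarith [(hcv j hj).2]) (hstep j hj) (hrep j hj)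
  have hbound : ∀ q ≤ N, β q ^ 2 ≤ β 0 ^ 2 * exp (κ * S) ∧ β 0 ^ 2 ≤ β q ^ 2 * exp (κ * S) := by
    intro q hq
    rw [Finset.mul_sum]
    refine le_mul_exp_sum_range_of_steps (fun j => sq_nonneg (β j))
      (fun j => mul_nonneg (by positivity) (abs_nonneg _)) (fun j hj => ?_) hq
    have e := henergy j hj.le _ ⟨(hmono j hj.le).le, le_rfl⟩
    have e' := henergy (j + 1) hj _ ⟨le_rfl, (hmono (j + 1) hj).le⟩
    exact ⟨abs_sub_comm (cv j) _ ▸ sq_le_sq_mul_exp_of_energy_eq hcm hε hL (hcv j hj.le)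
        (hcv (j + 1) hj) hμ.ne' e e',
      sq_le_sq_mul_exp_of_energy_eq hcm hε hL (hcv (j + 1) hj) (hcv j hj.le) hμ.ne' e' e⟩
  have hβ0 : β 0 ≠ 0 := by
    intro hβ0
    obtain ⟨y, hy, huy⟩ := hnt
    obtain ⟨j, hj, hyj⟩ := exists_mem_Icc_succ_of_mem_Icc (h := h) (N := N) (by rwa [hh0, hhN])
    have hβj : β j = 0 := by simpa [hβ0] using (hbound j hj).1
    have hP : 0 < μ ^ 2 * (cv j * (L - cv j)) :=
      mul_pos (by positivity) (mul_sub_pos_of_mem_Icc hcm (by linarith) (hcv j hj))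
    have := henergy j hj y hyj
    rw [hβj, zero_pow two_ne_zero, mul_zero] at this
    linarith [mul_pos hP (sq_pos_of_ne_zero huy), sq_nonneg (v y)]
  simpa only [neg_mul, mul_assoc] using sq_comparable_of_forall_le_mul_exp hβ0 hbound

/-- comparability of the arch amplitudes `β_j` for a piecewise constant
coefficient, with `κ = (1/cm)·max(1, (cM - ε)/ε)` and `V` the total variation. -/
theorem stmt16 (cm cM H : ℝ) (hcm : 0 < cm) (hcmM : cm < cM) (hH : 0 < H)
    (ε μ lam : ℝ) (hε : 0 < ε) (hμ : 0 < μ) (hlam : (cM + ε) * μ ^ 2 ≤ lam)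
    (N : ℕ) (h : ℕ → ℝ) (cv : ℕ → ℝ) (c : ℝ → ℝ)
    (hh0 : h 0 = 0) (hhN : h (N + 1) = H)
    (hmono : ∀ j ≤ N, h j < h (j + 1))
    (hcv : ∀ j ≤ N, cv j ∈ Set.Icc cm cM)
    (hstep : ∀ j ≤ N, ∀ y ∈ Set.Ioo (h j) (h (j + 1)), c y = cv j)
    (u v g : ℝ → ℝ) (hsol : IsReducedSolutionOn 0 H c μ lam u v g)
    (hu0 : u 0 = 0) (huH : u H = 0) (hnt : ∃ y ∈ Set.Icc (0 : ℝ) H, u y ≠ 0)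
    (β γ : ℕ → ℝ)
    (hrep : ∀ j ≤ N, ∀ y ∈ Set.Ioo (h j) (h (j + 1)),
      u y = β j * Real.sin (μ * Real.sqrt ((lam / μ ^ 2 - cv j) / cv j) * (y - γ j))) :
    (∀ j ≤ N, β j ≠ 0) ∧
    (∀ q ≤ N,
      β 0 ^ 2 * Real.exp (-(1 / cm * max 1 ((cM - ε) / ε)) *
          (∑ j ∈ Finset.range N, |cv (j + 1) - cv j|)) ≤ β q ^ 2 ∧
      β q ^ 2 ≤ β 0 ^ 2 * Real.exp ((1 / cm * max 1 ((cM - ε) / ε)) *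
          (∑ j ∈ Finset.range N, |cv (j + 1) - cv j|))) ∧
    (∀ q ≤ N, ∀ q' ≤ N,
      β q ^ 2 ≤ β q' ^ 2 * Real.exp (2 * (1 / cm * max 1 ((cM - ε) / ε)) *
          (∑ j ∈ Finset.range N, |cv (j + 1) - cv j|))) :=
  stmt16_general cm cM H hcm ε μ lam hε hμ hlam N h cv c hh0 hhN hmono hcv hstep u v g hsol hnt β γ
    hrep
end
end

section
/- (Minimal amplitude hypothesis for coefficients of bounded variation, uniformly in the class.) Fix ε > 0, V > 0 and μ₁ > 0. Then there exists r > 0, depending only on ε, c_m, c_M, V, H, μ₁, such that for every function c : [0,H] → ℝ with c_m ≤ c(y) ≤ c_M for all y and total variation at most V, every μ ≥ μ₁, every λ ≥ (c_M + ε)μ², and every normalized Dirichlet solution u (with flux v) of the reduced problem with coefficient c and parameters (μ,λ): u(y)² + v(y)² ≥ r² for all y ∈ [0,H]. -/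
/-!
With the weight `w = 1 / (c (λ - c μ²))`, the energy `E = u² + w(c) v²` of a solution satisfies,
formally, `E' = (w ∘ c)' v²`; hence `log E` oscillates no more than `log (w ∘ c)`, which
oscillates by at most `1/c_m + 1/ε` times the oscillation of `c`, uniformly in `λ` and `μ`.
Since `c` is only of bounded variation, the weight is frozen on short intervals: there the frozen
energy is absolutely continuous and Grönwall's lemma controls it, while unfreezing the weight
costs a factor paid for by the variation of `c`. Chaining short intervals gives
`E y ≥ exp (-(1/c_m + 1/ε + 1) V) E y₀`. Finally `∫ u² = 1` provides a point `y₀` with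
`E y₀ ≥ 1/H`, and `u² + v² ≥ E / (1 + 1/(c_m ε μ²))`.
-/

open MeasureTheory Set Filter Topology

noncomputable section

theorem AbsolutelyContinuousOnInterval.congr {f g : ℝ → ℝ} {a b : ℝ}
    (hf : AbsolutelyContinuousOnInterval f a b) (h : EqOn f g (uIcc a b)) :
    AbsolutelyContinuousOnInterval g a b := by
  refine hf.congr' (eventually_inf_principal.2 (Eventually.of_forall fun E hE => ?_))
  refine Finset.sum_congr rfl fun i hi => ?_
  rw [h (hE.1 i hi).1, h (hE.1 i hi).2]

theorem absolutelyContinuousOnInterval_of_eq_add_integral {f P : ℝ → ℝ} {a b : ℝ}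
    (hab : a ≤ b) (hf : IntervalIntegrable f volume a b)
    (hP : ∀ x ∈ Icc a b, P x = P a + ∫ t in a..x, f t) :
    AbsolutelyContinuousOnInterval P a b := by
  refine ((contDiffOn_const (c := P a)).absolutelyContinuousOnInterval.fun_add
    (hf.absolutelyContinuousOnInterval_intervalIntegral (c := a) (by simp))).congr ?_
  rw [uIcc_of_le hab]
  exact fun x hx => (hP x hx).symm

theorem ae_hasDerivAt_of_eq_add_integral {f P : ℝ → ℝ} {a b : ℝ}
    (hf : IntervalIntegrable f volume a b)
    (hP : ∀ x ∈ Icc a b, P x = P a + ∫ t in a..x, f t) :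
    ∀ᵐ x, x ∈ Ioo a b → HasDerivAt P (f x) x := by
  filter_upwards [hf.ae_hasDerivAt_integral] with x hx hxab
  refine ((hx (Ioo_subset_Icc_self.trans Icc_subset_uIcc hxab) a left_mem_uIcc).const_add
    (P a)).congr_of_eventuallyEq ?_
  filter_upwards [Ioo_mem_nhds hxab.1 hxab.2] with y hy
  exact hP y (Ioo_subset_Icc_self hy)

theorem AbsolutelyContinuousOnInterval.le_of_ae_hasDerivAt_nonneg {φ φ' : ℝ → ℝ} {a b : ℝ}
    (hab : a ≤ b) (hφ : AbsolutelyContinuousOnInterval φ a b)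
    (hderiv : ∀ᵐ x, x ∈ Ioo a b → HasDerivAt φ (φ' x) x)
    (hnonneg : ∀ᵐ x, x ∈ Ioo a b → 0 ≤ φ' x) : φ a ≤ φ b := by
  have h := hφ.integral_deriv_eq_sub
  suffices 0 ≤ ∫ x in a..b, deriv φ x by linarith
  refine intervalIntegral.integral_nonneg_of_ae_restrict hab ?_
  rw [EventuallyLE, ae_restrict_iff' measurableSet_Icc]
  have ha : ∀ᵐ x : ℝ, x ≠ a := by simp [ae_iff, measure_singleton]
  have hb : ∀ᵐ x : ℝ, x ≠ b := by simp [ae_iff, measure_singleton]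
  filter_upwards [hderiv, hnonneg, ha, hb] with x hd hn hxa hxb hx
  have hx' : x ∈ Ioo a b := ⟨lt_of_le_of_ne hx.1 (Ne.symm hxa), lt_of_le_of_ne hx.2 hxb⟩
  simpa [(hd hx').deriv] using hn hx'

theorem AbsolutelyContinuousOnInterval.mul_exp_le_of_ae_hasDerivAt {F F' : ℝ → ℝ}
    {a b C : ℝ} (hab : a ≤ b) (hF : AbsolutelyContinuousOnInterval F a b)
    (hderiv : ∀ᵐ x, x ∈ Ioo a b → HasDerivAt F (F' x) x)
    (hC : ∀ᵐ x, x ∈ Ioo a b → -(C * F x) ≤ F' x) :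
    F a * Real.exp (C * a) ≤ F b * Real.exp (C * b) := by
  have hexp : AbsolutelyContinuousOnInterval (fun x => Real.exp (C * x)) a b :=
    ContDiffOn.absolutelyContinuousOnInterval (by fun_prop)
  refine (hF.fun_mul hexp).le_of_ae_hasDerivAt_nonneg hab
    (φ' := fun x => F' x * Real.exp (C * x) + F x * (Real.exp (C * x) * (C * 1))) ?_ ?_
  · filter_upwards [hderiv] with x hx hxab
    exact (hx hxab).mul ((hasDerivAt_id' x).const_mul C).exp
  · filter_upwards [hC] with x hx hxab
    have := hx hxab
    have hpos := Real.exp_pos (C * x)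
    nlinarith

theorem AbsolutelyContinuousOnInterval.gronwall {F F' : ℝ → ℝ} {a b C : ℝ}
    (hab : a ≤ b) (hF : AbsolutelyContinuousOnInterval F a b)
    (hderiv : ∀ᵐ x, x ∈ Ioo a b → HasDerivAt F (F' x) x)
    (hC : ∀ᵐ x, x ∈ Ioo a b → |F' x| ≤ C * F x) :
    F a * Real.exp (-(C * (b - a))) ≤ F b ∧ F b * Real.exp (-(C * (b - a))) ≤ F a := by
  have hfwd := hF.mul_exp_le_of_ae_hasDerivAt hab hderiv
    (by filter_upwards [hC] with x hx hxab using neg_le_of_abs_le (hx hxab))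
  have hbwd := hF.neg.mul_exp_le_of_ae_hasDerivAt (C := -C) hab
    (by filter_upwards [hderiv] with x hx hxab using (hx hxab).neg)
    (by
      filter_upwards [hC] with x hx hxab
      simp only [Pi.neg_apply]
      linarith [le_abs_self (F' x), hx hxab])
  simp only [Pi.neg_apply, neg_mul, neg_le_neg_iff] at hbwd
  constructor
  · have := mul_le_mul_of_nonneg_right hfwd (Real.exp_pos (-(C * b))).le
    rwa [mul_assoc, mul_assoc, ← Real.exp_add, ← Real.exp_add, add_neg_cancel, Real.exp_zero,
      mul_one, show C * a + -(C * b) = -(C * (b - a)) by ring] at this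
  · have := mul_le_mul_of_nonneg_right hbwd (Real.exp_pos (C * a)).le
    rwa [mul_assoc, mul_assoc, ← Real.exp_add, ← Real.exp_add, neg_add_cancel, Real.exp_zero,
      mul_one, show -(C * b) + C * a = -(C * (b - a)) by ring] at this

theorem rel_of_local_of_trans {R : ℝ → ℝ → Prop} {a b δ : ℝ} (hδ : 0 < δ)
    (hloc : ∀ s t, a ≤ s → s ≤ t → t ≤ b → t - s ≤ δ → R s t)
    (htrans : ∀ s m t, a ≤ s → s ≤ m → m ≤ t → t ≤ b → R s m → R m t → R s t)
    {s t : ℝ} (hs : a ≤ s) (hst : s ≤ t) (ht : t ≤ b) : R s t := by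
  have key : ∀ n : ℕ, ∀ s t, a ≤ s → s ≤ t → t ≤ b → t - s ≤ n * δ → R s t := by
    intro n
    induction n with
    | zero =>
      intro s t hs hst ht hts
      exact hloc s t hs hst ht (by simp only [CharP.cast_eq_zero, zero_mul] at hts; linarith)
    | succ n ih =>
      intro s t hs hst ht hts
      by_cases hshort : t - s ≤ δ
      · exact hloc s t hs hst ht hshort
      · push_cast at hts
        exact htrans s (t - δ) t hs (by linarith) (by linarith) ht
          (ih s (t - δ) hs (by linarith) (by linarith) (by linarith))
          (hloc (t - δ) t (by linarith) (by linarith) ht (by linarith))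
  obtain ⟨n, hn⟩ := exists_nat_ge ((t - s) / δ)
  exact key n s t hs hst ht ((div_le_iff₀ hδ).1 hn)

theorem exists_mem_Icc_integral_le_mul {f : ℝ → ℝ} {a b : ℝ} (hab : a ≤ b)
    (hf : ContinuousOn f (Icc a b)) : ∃ y ∈ Icc a b, ∫ x in a..b, f x ≤ (b - a) * f y := by
  obtain ⟨y, hy, hmax⟩ := isCompact_Icc.exists_isMaxOn (nonempty_Icc.2 hab) hf
  refine ⟨y, hy, ?_⟩
  calc ∫ x in a..b, f x ≤ ∫ _ in a..b, f y :=
        intervalIntegral.integral_mono_on hab (hf.intervalIntegrable_of_Icc hab)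
          intervalIntegrable_const hmax
    _ = (b - a) * f y := by simp

theorem BoundedVariationOn.abs_sub_le_variationOnFromTo_sub {c : ℝ → ℝ} {a b : ℝ}
    (hc : BoundedVariationOn c (Icc a b)) {s x t : ℝ} (hs : a ≤ s) (hsx : s ≤ x)
    (hxt : x ≤ t) (ht : t ≤ b) :
    |c x - c s| ≤ variationOnFromTo c (Icc a b) a t - variationOnFromTo c (Icc a b) a s := by
  have hmem : ∀ {y}, a ≤ y → y ≤ b → y ∈ Icc a b := fun h1 h2 => ⟨h1, h2⟩
  have hab : a ≤ b := hs.trans (hsx.trans (hxt.trans ht))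
  refine (variationOnFromTo.abs_sub_le_sub_of_le hc.locallyBoundedVariationOn (hmem le_rfl hab)
    (hmem hs (hsx.trans (hxt.trans ht))) (hmem (hs.trans hsx) (hxt.trans ht)) hsx).trans ?_
  gcongr
  exact variationOnFromTo.monotoneOn hc.locallyBoundedVariationOn (hmem le_rfl hab)
    (hmem (hs.trans hsx) (hxt.trans ht)) (hmem (hs.trans (hsx.trans hxt)) ht) hxt

theorem BoundedVariationOn.variationOnFromTo_sub_le {c : ℝ → ℝ} {a b : ℝ}
    (hc : BoundedVariationOn c (Icc a b)) {s t : ℝ} (hs : s ∈ Icc a b) (ht : t ∈ Icc a b) :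
    variationOnFromTo c (Icc a b) a t - variationOnFromTo c (Icc a b) a s ≤
      (eVariationOn c (Icc a b)).toReal := by
  rw [variationOnFromTo.sub_right hc.locallyBoundedVariationOn ⟨le_rfl, hs.1.trans hs.2⟩ ht hs]
  exact (le_abs_self _).trans (variationOnFromTo.abs_le_eVariationOn hc)

theorem le_mul_exp_of_abs_sub_le {x y k : ℝ} (hy : 0 ≤ y) (h : |x - y| ≤ k * y) :
    x ≤ y * Real.exp k := by
  have := Real.add_one_le_exp k
  nlinarith [le_abs_self (x - y)]

def reducedWeight (μ lam γ : ℝ) : ℝ := (γ * (lam - γ * μ ^ 2))⁻¹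

section reducedWeight

variable {cm cM ε μ lam γ γ₀ : ℝ}

theorem mul_sq_le_sub_mul_sq (hlam : (cM + ε) * μ ^ 2 ≤ lam) (hγ : γ ≤ cM) :
    ε * μ ^ 2 ≤ lam - γ * μ ^ 2 := by
  nlinarith [sq_nonneg μ]

theorem mul_le_mul_sub_mul_sq (hcm : 0 < cm) (hε : 0 < ε) (hlam : (cM + ε) * μ ^ 2 ≤ lam)
    (hγ : γ ∈ Icc cm cM) : cm * (ε * μ ^ 2) ≤ γ * (lam - γ * μ ^ 2) :=
  mul_le_mul hγ.1 (mul_sq_le_sub_mul_sq hlam hγ.2) (by positivity) (hcm.le.trans hγ.1)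

theorem reducedWeight_pos (hcm : 0 < cm) (hε : 0 < ε) (hμ : μ ≠ 0)
    (hlam : (cM + ε) * μ ^ 2 ≤ lam) (hγ : γ ∈ Icc cm cM) : 0 < reducedWeight μ lam γ :=
  inv_pos.2 ((by positivity : 0 < cm * (ε * μ ^ 2)).trans_le
    (mul_le_mul_sub_mul_sq hcm hε hlam hγ))

theorem reducedWeight_le (hcm : 0 < cm) (hε : 0 < ε) (hμ : μ ≠ 0)
    (hlam : (cM + ε) * μ ^ 2 ≤ lam) (hγ : γ ∈ Icc cm cM) :
    reducedWeight μ lam γ ≤ (cm * (ε * μ ^ 2))⁻¹ :=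
  inv_anti₀ (by positivity) (mul_le_mul_sub_mul_sq hcm hε hlam hγ)

theorem reducedWeight_mul_exp_le (hcm : 0 < cm) (hε : 0 < ε) (hμ : μ ≠ 0)
    (hlam : (cM + ε) * μ ^ 2 ≤ lam) (hγ : γ ∈ Icc cm cM) (hγ₀ : γ₀ ∈ Icc cm cM) :
    reducedWeight μ lam γ₀ * Real.exp (-((cm⁻¹ + ε⁻¹) * |γ - γ₀|)) ≤
      reducedWeight μ lam γ := by
  have hD₀ := mul_sq_le_sub_mul_sq hlam hγ₀.2
  have hμ2 : 0 < μ ^ 2 := by positivity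
  have hγ₀pos : 0 < γ₀ := hcm.trans_le hγ₀.1
  have hD₀pos : 0 < lam - γ₀ * μ ^ 2 := (by positivity : 0 < ε * μ ^ 2).trans_le hD₀
  have h1 : γ ≤ γ₀ * Real.exp (cm⁻¹ * |γ - γ₀|) := by
    refine le_mul_exp_of_abs_sub_le hγ₀pos.le ?_
    calc |γ - γ₀| = cm⁻¹ * |γ - γ₀| * cm := by field_simp
      _ ≤ cm⁻¹ * |γ - γ₀| * γ₀ := by gcongr; exact hγ₀.1
  have h2 : lam - γ * μ ^ 2 ≤ (lam - γ₀ * μ ^ 2) * Real.exp (ε⁻¹ * |γ - γ₀|) := by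
    refine le_mul_exp_of_abs_sub_le hD₀pos.le ?_
    calc |lam - γ * μ ^ 2 - (lam - γ₀ * μ ^ 2)| = ε⁻¹ * |γ - γ₀| * (ε * μ ^ 2) := by
          rw [show lam - γ * μ ^ 2 - (lam - γ₀ * μ ^ 2) = (γ₀ - γ) * μ ^ 2 by ring,
            abs_mul, abs_of_pos hμ2, abs_sub_comm]
          field_simp
      _ ≤ ε⁻¹ * |γ - γ₀| * (lam - γ₀ * μ ^ 2) := by gcongr
  have h3 : γ * (lam - γ * μ ^ 2) ≤
      γ₀ * (lam - γ₀ * μ ^ 2) * Real.exp ((cm⁻¹ + ε⁻¹) * |γ - γ₀|) := by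
    rw [add_mul, Real.exp_add, mul_mul_mul_comm]
    exact mul_le_mul h1 h2 ((by positivity : 0 < ε * μ ^ 2).le.trans
      (mul_sq_le_sub_mul_sq hlam hγ.2)) (by positivity)
  have h4 := mul_le_mul_sub_mul_sq hcm hε hlam hγ
  unfold reducedWeight
  rw [Real.exp_neg, ← mul_inv]
  exact inv_anti₀ ((by positivity : 0 < cm * (ε * μ ^ 2)).trans_le h4) h3

theorem abs_inv_sub_mul_reducedWeight_le (hcm : 0 < cm) (hε : 0 < ε) (hμ : μ ≠ 0)
    (hlam : (cM + ε) * μ ^ 2 ≤ lam) (hγ : γ ∈ Icc cm cM) (hγ₀ : γ₀ ∈ Icc cm cM) :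
    |γ⁻¹ - (lam - γ * μ ^ 2) * reducedWeight μ lam γ₀| ≤
      lam * reducedWeight μ lam γ₀ * |γ - γ₀| / cm := by
  have hγpos : 0 < γ := hcm.trans_le hγ.1
  have hprod₀ := (by positivity : 0 < cm * (ε * μ ^ 2)).trans_le
    (mul_le_mul_sub_mul_sq hcm hε hlam hγ₀)
  have hw₀ := reducedWeight_pos hcm hε hμ hlam hγ₀
  have hsum : |lam - (γ + γ₀) * μ ^ 2| ≤ lam := by
    have := mul_sq_le_sub_mul_sq hlam hγ.2
    have := mul_sq_le_sub_mul_sq hlam hγ₀.2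
    rw [abs_le]; constructor <;> nlinarith [sq_nonneg μ, hγpos, hcm.trans_le hγ₀.1]
  have hid : γ⁻¹ - (lam - γ * μ ^ 2) * reducedWeight μ lam γ₀ =
      reducedWeight μ lam γ₀ * (γ₀ - γ) * (lam - (γ + γ₀) * μ ^ 2) / γ := by
    have hw : reducedWeight μ lam γ₀ * (γ₀ * (lam - γ₀ * μ ^ 2)) = 1 :=
      inv_mul_cancel₀ hprod₀.ne'
    rw [eq_div_iff hγpos.ne', sub_mul, inv_mul_cancel₀ hγpos.ne']
    linear_combination (-1 : ℝ) * hw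
  rw [hid, abs_div, abs_mul, abs_mul, abs_of_pos hw₀, abs_of_pos hγpos, abs_sub_comm]
  calc reducedWeight μ lam γ₀ * |γ - γ₀| * |lam - (γ + γ₀) * μ ^ 2| / γ
      ≤ reducedWeight μ lam γ₀ * |γ - γ₀| * lam / γ := by gcongr
    _ ≤ lam * reducedWeight μ lam γ₀ * |γ - γ₀| / cm := by
      have hlam0 : 0 ≤ lam := (mul_nonneg (by linarith [hγ.1, hγ.2]) (sq_nonneg μ)).trans hlam
      rw [show reducedWeight μ lam γ₀ * |γ - γ₀| * lam =
        lam * reducedWeight μ lam γ₀ * |γ - γ₀| by ring]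
      exact div_le_div_of_nonneg_left (by positivity) hcm hγ.1

/-- Grönwall rate, per unit oscillation of `c`, of the energy whose weight is frozen at a point. -/
def frozenRate (cm ε μ lam : ℝ) : ℝ := lam * ((cm * (ε * μ ^ 2))⁻¹ + 1) / cm

theorem abs_two_mul_mul_inv_sub_le (hcm : 0 < cm) (hε : 0 < ε) (hμ : μ ≠ 0)
    (hlam : (cM + ε) * μ ^ 2 ≤ lam) (hγ : γ ∈ Icc cm cM) (hγ₀ : γ₀ ∈ Icc cm cM)
    (p q : ℝ) :
    |2 * p * q * (γ⁻¹ - (lam - γ * μ ^ 2) * reducedWeight μ lam γ₀)| ≤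
      frozenRate cm ε μ lam * |γ - γ₀| * (p ^ 2 + reducedWeight μ lam γ₀ * q ^ 2) := by
  set w₀ := reducedWeight μ lam γ₀
  have hw₀ : 0 < w₀ := reducedWeight_pos hcm hε hμ hlam hγ₀
  have hlam0 : 0 ≤ lam := (mul_nonneg (by linarith [hγ.1, hγ.2]) (sq_nonneg μ)).trans hlam
  have hA := abs_inv_sub_mul_reducedWeight_le hcm hε hμ hlam hγ hγ₀
  have hpq : |2 * p * q| ≤ (1 + w₀⁻¹) * (p ^ 2 + w₀ * q ^ 2) := by
    have : (1 + w₀⁻¹) * (p ^ 2 + w₀ * q ^ 2) =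
        p ^ 2 + q ^ 2 + (w₀ * q ^ 2 + w₀⁻¹ * p ^ 2) := by
      field_simp; ring
    rw [this, abs_le]
    constructor <;> nlinarith [sq_nonneg (p + q), sq_nonneg (p - q), hw₀, inv_pos.2 hw₀,
      mul_nonneg hw₀.le (sq_nonneg q), mul_nonneg (inv_pos.2 hw₀).le (sq_nonneg p)]
  calc |2 * p * q * (γ⁻¹ - (lam - γ * μ ^ 2) * w₀)|
      ≤ (1 + w₀⁻¹) * (p ^ 2 + w₀ * q ^ 2) * (lam * w₀ * |γ - γ₀| / cm) := by
        rw [abs_mul]; gcongr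
    _ = lam * (w₀ + 1) / cm * |γ - γ₀| * (p ^ 2 + w₀ * q ^ 2) := by field_simp
    _ ≤ frozenRate cm ε μ lam * |γ - γ₀| * (p ^ 2 + w₀ * q ^ 2) := by
        unfold frozenRate
        gcongr
        exact reducedWeight_le hcm hε hμ hlam hγ₀

theorem frozenRate_pos (hcm : 0 < cm) (hε : 0 < ε) (hμ : μ ≠ 0) (hγ : γ ∈ Icc cm cM)
    (hlam : (cM + ε) * μ ^ 2 ≤ lam) : 0 < frozenRate cm ε μ lam := by
  have : 0 < lam :=
    lt_of_lt_of_le (mul_pos (by linarith [hγ.1, hγ.2]) (by positivity)) hlam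
  unfold frozenRate
  positivity

end reducedWeight

def reducedEnergy (c : ℝ → ℝ) (μ lam : ℝ) (u v : ℝ → ℝ) (y : ℝ) : ℝ :=
  u y ^ 2 + reducedWeight μ lam (c y) * v y ^ 2

section reducedEnergy

variable {cm cM ε μ lam y : ℝ} {c u v : ℝ → ℝ}

theorem sq_le_reducedEnergy (hcm : 0 < cm) (hε : 0 < ε) (hμ : μ ≠ 0)
    (hlam : (cM + ε) * μ ^ 2 ≤ lam) (hy : c y ∈ Icc cm cM) :
    u y ^ 2 ≤ reducedEnergy c μ lam u v y :=
  le_add_of_nonneg_right (mul_nonneg (reducedWeight_pos hcm hε hμ hlam hy).le (sq_nonneg _))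

theorem reducedEnergy_le (hcm : 0 < cm) (hε : 0 < ε) (hμ : μ ≠ 0)
    (hlam : (cM + ε) * μ ^ 2 ≤ lam) (hy : c y ∈ Icc cm cM) :
    reducedEnergy c μ lam u v y ≤ (1 + (cm * (ε * μ ^ 2))⁻¹) * (u y ^ 2 + v y ^ 2) := by
  have hw := reducedWeight_le hcm hε hμ hlam hy
  have hw0 := (reducedWeight_pos hcm hε hμ hlam hy).le
  unfold reducedEnergy
  nlinarith [sq_nonneg (u y), sq_nonneg (v y), mul_le_mul_of_nonneg_right hw (sq_nonneg (v y)),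
    mul_nonneg (inv_nonneg.2 (by positivity : (0 : ℝ) ≤ cm * (ε * μ ^ 2))) (sq_nonneg (u y))]

end reducedEnergy

namespace IsReducedSolutionOn

variable {a b cm cM ε μ lam : ℝ} {c u v g : ℝ → ℝ}

theorem absolutelyContinuousOnInterval_u (hab : a ≤ b)
    (hsol : IsReducedSolutionOn a b c μ lam u v g) : AbsolutelyContinuousOnInterval u a b :=
  absolutelyContinuousOnInterval_of_eq_add_integral hab hsol.1 hsol.2.2.1

theorem absolutelyContinuousOnInterval_v (hab : a ≤ b)
    (hsol : IsReducedSolutionOn a b c μ lam u v g) : AbsolutelyContinuousOnInterval v a b :=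
  absolutelyContinuousOnInterval_of_eq_add_integral hab hsol.2.2.2.2.1 hsol.2.2.2.2.2

theorem ae_hasDerivAt_u (hsol : IsReducedSolutionOn a b c μ lam u v g)
    (hc : ∀ y ∈ Ioo a b, c y ≠ 0) :
    ∀ᵐ x, x ∈ Ioo a b → HasDerivAt u (v x / c x) x := by
  have hflux := (ae_restrict_iff' measurableSet_Ioo).1 hsol.2.2.2.1
  filter_upwards [ae_hasDerivAt_of_eq_add_integral hsol.1 hsol.2.2.1, hflux] with x hu hv hx
  rw [hv hx, mul_div_cancel_left₀ _ (hc x hx)]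
  exact hu hx

theorem ae_hasDerivAt_v (hsol : IsReducedSolutionOn a b c μ lam u v g) :
    ∀ᵐ x, x ∈ Ioo a b → HasDerivAt v ((c x * μ ^ 2 - lam) * u x) x :=
  ae_hasDerivAt_of_eq_add_integral hsol.2.2.2.2.1 hsol.2.2.2.2.2

theorem ae_hasDerivAt_frozenEnergy (hsol : IsReducedSolutionOn a b c μ lam u v g)
    (hc : ∀ y ∈ Ioo a b, c y ≠ 0) (w₀ : ℝ) :
    ∀ᵐ x, x ∈ Ioo a b → HasDerivAt (fun y => u y ^ 2 + w₀ * v y ^ 2)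
      (2 * u x * v x * ((c x)⁻¹ - (lam - c x * μ ^ 2) * w₀)) x := by
  filter_upwards [hsol.ae_hasDerivAt_u hc, hsol.ae_hasDerivAt_v] with x hu hv hx
  refine (((hu hx).fun_pow 2).fun_add (((hv hx).fun_pow 2).const_mul w₀)).congr_deriv ?_
  field_simp [hc x hx]
  ring

theorem frozenEnergy_comparable (hab : a ≤ b) (hsol : IsReducedSolutionOn a b c μ lam u v g)
    (hcm : 0 < cm) (hε : 0 < ε) (hμ : μ ≠ 0) (hlam : (cM + ε) * μ ^ 2 ≤ lam)
    (hc : ∀ y ∈ Icc a b, c y ∈ Icc cm cM) {s t Δ : ℝ} (hs : a ≤ s) (hst : s ≤ t)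
    (ht : t ≤ b) (hosc : ∀ x ∈ Icc s t, |c x - c s| ≤ Δ)
    (hδ : frozenRate cm ε μ lam * (t - s) ≤ 1) :
    (u s ^ 2 + reducedWeight μ lam (c s) * v s ^ 2) * Real.exp (-Δ) ≤
        u t ^ 2 + reducedWeight μ lam (c s) * v t ^ 2 ∧
      (u t ^ 2 + reducedWeight μ lam (c s) * v t ^ 2) * Real.exp (-Δ) ≤
        u s ^ 2 + reducedWeight μ lam (c s) * v s ^ 2 := by
  have hsub : uIcc s t ⊆ uIcc a b := by
    rw [uIcc_of_le hst, uIcc_of_le hab]; exact Icc_subset_Icc hs ht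
  have hIoo : Ioo s t ⊆ Ioo a b := Ioo_subset_Ioo hs ht
  set w₀ := reducedWeight μ lam (c s)
  have hw₀ : 0 < w₀ := reducedWeight_pos hcm hε hμ hlam (hc s ⟨hs, hst.trans ht⟩)
  have hc0 : ∀ y ∈ Ioo a b, c y ≠ 0 := fun y hy =>
    (hcm.trans_le (hc y (Ioo_subset_Icc_self hy)).1).ne'
  have hAC : AbsolutelyContinuousOnInterval (fun y => u y ^ 2 + w₀ * v y ^ 2) s t := by
    have hu := (hsol.absolutelyContinuousOnInterval_u hab).mono hsub
    have hv := (hsol.absolutelyContinuousOnInterval_v hab).mono hsub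
    simpa only [sq] using (hu.fun_mul hu).fun_add ((hv.fun_mul hv).const_mul w₀)
  have hΔ : 0 ≤ Δ := (abs_nonneg _).trans (hosc s ⟨le_rfl, hst⟩)
  have hrate := (frozenRate_pos hcm hε hμ (hc s ⟨hs, hst.trans ht⟩) hlam).le
  have hgron := hAC.gronwall (C := frozenRate cm ε μ lam * Δ) hst
    (by
      filter_upwards [hsol.ae_hasDerivAt_frozenEnergy hc0 w₀] with x hx hxst
      exact hx (hIoo hxst))
    (by
      filter_upwards with x hxst
      have hx : x ∈ Icc a b := ⟨hs.trans hxst.1.le, hxst.2.le.trans ht⟩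
      refine (abs_two_mul_mul_inv_sub_le hcm hε hμ hlam (hc x hx) (hc s ⟨hs, hst.trans ht⟩)
        (u x) (v x)).trans ?_
      gcongr
      exact hosc x (Ioo_subset_Icc_self hxst))
  have hexp : Real.exp (-Δ) ≤ Real.exp (-(frozenRate cm ε μ lam * Δ * (t - s))) := by
    gcongr
    nlinarith
  exact ⟨(mul_le_mul_of_nonneg_left hexp (by positivity)).trans hgron.1,
    (mul_le_mul_of_nonneg_left hexp (by positivity)).trans hgron.2⟩

theorem energy_comparable_of_sub_le (hab : a ≤ b) (hsol : IsReducedSolutionOn a b c μ lam u v g)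
    (hcm : 0 < cm) (hε : 0 < ε) (hμ : μ ≠ 0) (hlam : (cM + ε) * μ ^ 2 ≤ lam)
    (hc : ∀ y ∈ Icc a b, c y ∈ Icc cm cM) {s t Δ : ℝ} (hs : a ≤ s) (hst : s ≤ t)
    (ht : t ≤ b) (hosc : ∀ x ∈ Icc s t, |c x - c s| ≤ Δ)
    (hδ : frozenRate cm ε μ lam * (t - s) ≤ 1) :
    reducedEnergy c μ lam u v s * Real.exp (-((cm⁻¹ + ε⁻¹ + 1) * Δ)) ≤
        reducedEnergy c μ lam u v t ∧
      reducedEnergy c μ lam u v t * Real.exp (-((cm⁻¹ + ε⁻¹ + 1) * Δ)) ≤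
        reducedEnergy c μ lam u v s := by
  unfold reducedEnergy
  obtain ⟨hfwd, hbwd⟩ :=
    frozenEnergy_comparable hab hsol hcm hε hμ hlam hc hs hst ht hosc hδ
  have hcs := hc s ⟨hs, hst.trans ht⟩
  have hct := hc t ⟨hs.trans hst, ht⟩
  have hΔ : |c t - c s| ≤ Δ := hosc t ⟨hst, le_rfl⟩
  set θ := Real.exp (-((cm⁻¹ + ε⁻¹) * Δ))
  have hθ1 : θ ≤ 1 := Real.exp_le_one_iff.2
    (neg_nonpos.2 (mul_nonneg (by positivity) ((abs_nonneg _).trans hΔ)))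
  have hθ : ∀ {γ γ₀}, γ ∈ Icc cm cM → γ₀ ∈ Icc cm cM → |γ - γ₀| ≤ Δ →
      reducedWeight μ lam γ₀ * θ ≤ reducedWeight μ lam γ := fun hγ hγ₀ h =>
    (mul_le_mul_of_nonneg_left (Real.exp_le_exp.2 (by gcongr))
      (reducedWeight_pos hcm hε hμ hlam hγ₀).le).trans
        (reducedWeight_mul_exp_le hcm hε hμ hlam hγ hγ₀)
  have hsplit : Real.exp (-((cm⁻¹ + ε⁻¹ + 1) * Δ)) = θ * Real.exp (-Δ) := by
    rw [← Real.exp_add]; ring_nf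
  have hmix : ∀ {p q w w' : ℝ}, 0 ≤ p → 0 ≤ q → w * θ ≤ w' →
      θ * (p + w * q) ≤ p + w' * q :=
    fun hp hq hw => by nlinarith [Real.exp_pos (-((cm⁻¹ + ε⁻¹) * Δ))]
  rw [hsplit]
  constructor
  · calc (u s ^ 2 + reducedWeight μ lam (c s) * v s ^ 2) * (θ * Real.exp (-Δ))
        = θ * ((u s ^ 2 + reducedWeight μ lam (c s) * v s ^ 2) * Real.exp (-Δ)) := by ring
      _ ≤ θ * (u t ^ 2 + reducedWeight μ lam (c s) * v t ^ 2) := by gcongr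
      _ ≤ _ := hmix (sq_nonneg _) (sq_nonneg _) (hθ hct hcs hΔ)
  · calc (u t ^ 2 + reducedWeight μ lam (c t) * v t ^ 2) * (θ * Real.exp (-Δ))
        = θ * (u t ^ 2 + reducedWeight μ lam (c t) * v t ^ 2) * Real.exp (-Δ) := by ring
      _ ≤ (u t ^ 2 + reducedWeight μ lam (c s) * v t ^ 2) * Real.exp (-Δ) := by
        gcongr
        exact hmix (sq_nonneg _) (sq_nonneg _) (hθ hcs hct (by rwa [abs_sub_comm]))
      _ ≤ _ := hbwd

theorem energy_comparable (hab : a ≤ b) (hsol : IsReducedSolutionOn a b c μ lam u v g)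
    (hcm : 0 < cm) (hε : 0 < ε) (hμ : μ ≠ 0) (hlam : (cM + ε) * μ ^ 2 ≤ lam)
    (hc : ∀ y ∈ Icc a b, c y ∈ Icc cm cM) {φ : ℝ → ℝ}
    (hφ : ∀ s x t, a ≤ s → s ≤ x → x ≤ t → t ≤ b → |c x - c s| ≤ φ t - φ s)
    {s t : ℝ} (hs : a ≤ s) (hst : s ≤ t) (ht : t ≤ b) :
    reducedEnergy c μ lam u v s * Real.exp (-((cm⁻¹ + ε⁻¹ + 1) * (φ t - φ s))) ≤
        reducedEnergy c μ lam u v t ∧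
      reducedEnergy c μ lam u v t * Real.exp (-((cm⁻¹ + ε⁻¹ + 1) * (φ t - φ s))) ≤
        reducedEnergy c μ lam u v s := by
  set E := reducedEnergy c μ lam u v
  set κ := cm⁻¹ + ε⁻¹ + 1
  have hrate := frozenRate_pos hcm hε hμ (hc a ⟨le_rfl, hab⟩) hlam
  refine rel_of_local_of_trans (R := fun s t =>
      E s * Real.exp (-(κ * (φ t - φ s))) ≤ E t ∧
        E t * Real.exp (-(κ * (φ t - φ s))) ≤ E s)
    (inv_pos.2 hrate) (fun s t hs hst ht hδ => ?_) (fun s m t hs hsm hmt ht hsm' hmt' => ?_)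
    hs hst ht
  · exact energy_comparable_of_sub_le hab hsol hcm hε hμ hlam hc hs hst ht
      (fun x hx => hφ s x t hs hx.1 hx.2 ht)
        (by simpa [hrate.ne'] using mul_le_mul_of_nonneg_left hδ hrate.le)
  · have hsplit : Real.exp (-(κ * (φ t - φ s))) =
        Real.exp (-(κ * (φ m - φ s))) * Real.exp (-(κ * (φ t - φ m))) := by
      rw [← Real.exp_add]; ring_nf
    rw [hsplit, ← mul_assoc, mul_comm (Real.exp _) (Real.exp _), ← mul_assoc (E t)]
    exact ⟨(mul_le_mul_of_nonneg_right hsm'.1 (Real.exp_pos _).le).trans hmt'.1,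
      (mul_le_mul_of_nonneg_right hmt'.2 (Real.exp_pos _).le).trans hsm'.2⟩

theorem exists_one_le_mul_reducedEnergy (hab : a ≤ b)
    (hsol : IsReducedSolutionOn a b c μ lam u v g) (hcm : 0 < cm) (hε : 0 < ε) (hμ : μ ≠ 0)
    (hlam : (cM + ε) * μ ^ 2 ≤ lam) (hc : ∀ y ∈ Icc a b, c y ∈ Icc cm cM)
    (hnorm : ∫ y in a..b, u y ^ 2 = 1) :
    ∃ y₀ ∈ Icc a b, 1 ≤ (b - a) * reducedEnergy c μ lam u v y₀ := by
  have hcont := (hsol.absolutelyContinuousOnInterval_u hab).continuousOn.pow 2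
  rw [uIcc_of_le hab] at hcont
  obtain ⟨y₀, hy₀, hle⟩ := exists_mem_Icc_integral_le_mul hab hcont
  refine ⟨y₀, hy₀, ?_⟩
  rw [← hnorm]
  exact hle.trans (mul_le_mul_of_nonneg_left (sq_le_reducedEnergy hcm hε hμ hlam (hc y₀ hy₀))
    (sub_nonneg.2 hab))

theorem exp_neg_mul_le_reducedEnergy (hab : a ≤ b)
    (hsol : IsReducedSolutionOn a b c μ lam u v g) (hcm : 0 < cm) (hε : 0 < ε) (hμ : μ ≠ 0)
    (hlam : (cM + ε) * μ ^ 2 ≤ lam) (hc : ∀ y ∈ Icc a b, c y ∈ Icc cm cM) {V : ℝ} (hV : 0 ≤ V)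
    (hvar : eVariationOn c (Icc a b) ≤ ENNReal.ofReal V) {y₀ y : ℝ} (hy₀ : y₀ ∈ Icc a b)
    (hy : y ∈ Icc a b) :
    Real.exp (-((cm⁻¹ + ε⁻¹ + 1) * V)) * reducedEnergy c μ lam u v y₀ ≤
      reducedEnergy c μ lam u v y := by
  have hBV : BoundedVariationOn c (Icc a b) := ne_top_of_le_ne_top ENNReal.ofReal_ne_top hvar
  have hvarV := ENNReal.toReal_le_of_le_ofReal hV hvar
  have hcomp := fun {s t} hs hst ht => hsol.energy_comparable hab hcm hε hμ hlam hc
    (fun s x t hs hsx hxt ht => hBV.abs_sub_le_variationOnFromTo_sub hs hsx hxt ht)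
    (s := s) (t := t) hs hst ht
  have hE₀ : 0 ≤ reducedEnergy c μ lam u v y₀ :=
    (sq_nonneg _).trans (sq_le_reducedEnergy hcm hε hμ hlam (hc y₀ hy₀))
  rw [mul_comm]
  rcases le_total y₀ y with h | h
  · refine le_trans ?_ (hcomp hy₀.1 h hy.2).1
    gcongr
    exact (hBV.variationOnFromTo_sub_le hy₀ hy).trans hvarV
  · refine le_trans ?_ (hcomp hy.1 h hy₀.2).2
    gcongr
    exact (hBV.variationOnFromTo_sub_le hy hy₀).trans hvarV

end IsReducedSolutionOn

theorem stmt17_general (cm cM H : ℝ) (hcm : 0 < cm) (hH : 0 < H)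
    (ε V μ₁ : ℝ) (hε : 0 < ε) (hV : 0 < V) (hμ₁ : 0 < μ₁) :
    ∃ r > (0:ℝ),
      ∀ c : ℝ → ℝ,
        (∀ y ∈ Set.Icc (0 : ℝ) H, cm ≤ c y ∧ c y ≤ cM) →
        eVariationOn c (Set.Icc 0 H) ≤ ENNReal.ofReal V →
        ∀ μ : ℝ, μ₁ ≤ μ → ∀ lam : ℝ, (cM + ε) * μ ^ 2 ≤ lam →
        ∀ u v g : ℝ → ℝ, IsReducedSolutionOn 0 H c μ lam u v g →
        u 0 = 0 → u H = 0 → (∫ y in (0:ℝ)..H, u y ^ 2) = 1 →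
        ∀ y ∈ Set.Icc (0 : ℝ) H, r ^ 2 ≤ u y ^ 2 + v y ^ 2 := by
  set κ := cm⁻¹ + ε⁻¹ + 1
  set K₁ := 1 + (cm * (ε * μ₁ ^ 2))⁻¹
  refine ⟨√(Real.exp (-(κ * V)) / (H * K₁)), by positivity, ?_⟩
  intro c hc hvar μ hμ lam hlam u v g hsol _ _ hnorm y hy
  have hμ0 : μ ≠ 0 := (hμ₁.trans_le hμ).ne'
  obtain ⟨y₀, hy₀, hE₀⟩ :=
    hsol.exists_one_le_mul_reducedEnergy hH.le hcm hε hμ0 hlam hc (by simpa using hnorm)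
  have hEy := hsol.exp_neg_mul_le_reducedEnergy hH.le hcm hε hμ0 hlam hc hV.le hvar hy₀ hy
  have hEK := reducedEnergy_le (u := u) (v := v) hcm hε hμ0 hlam (hc y hy)
  have hK : 1 + (cm * (ε * μ ^ 2))⁻¹ ≤ 1 + (cm * (ε * μ₁ ^ 2))⁻¹ := by gcongr
  rw [Real.sq_sqrt (by positivity), div_le_iff₀ (by positivity)]
  calc Real.exp (-(κ * V)) ≤ Real.exp (-(κ * V)) * ((H - 0) * reducedEnergy c μ lam u v y₀) :=
        le_mul_of_one_le_right (Real.exp_pos _).le hE₀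
    _ ≤ H * reducedEnergy c μ lam u v y := by
        rw [sub_zero, mul_left_comm]
        exact mul_le_mul_of_nonneg_left hEy hH.le
    _ ≤ H * (K₁ * (u y ^ 2 + v y ^ 2)) :=
        mul_le_mul_of_nonneg_left (hEK.trans (mul_le_mul_of_nonneg_right hK (by positivity))) hH.le
    _ = (u y ^ 2 + v y ^ 2) * (H * K₁) := by ring

/-- the minimal amplitude hypothesis for coefficients of bounded variation,
uniformly over the class of coefficients with total variation at most `V`. -/
theorem stmt17 (cm cM H : ℝ) (hcm : 0 < cm) (hcmM : cm < cM) (hH : 0 < H)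
    (ε V μ₁ : ℝ) (hε : 0 < ε) (hV : 0 < V) (hμ₁ : 0 < μ₁) :
    ∃ r > (0:ℝ),
      ∀ c : ℝ → ℝ,
        (∀ y ∈ Set.Icc (0 : ℝ) H, cm ≤ c y ∧ c y ≤ cM) →
        eVariationOn c (Set.Icc 0 H) ≤ ENNReal.ofReal V →
        ∀ μ : ℝ, μ₁ ≤ μ → ∀ lam : ℝ, (cM + ε) * μ ^ 2 ≤ lam →
        ∀ u v g : ℝ → ℝ, IsReducedSolutionOn 0 H c μ lam u v g →
        u 0 = 0 → u H = 0 → (∫ y in (0:ℝ)..H, u y ^ 2) = 1 →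
        ∀ y ∈ Set.Icc (0 : ℝ) H, r ^ 2 ≤ u y ^ 2 + v y ^ 2 :=
  stmt17_general cm cM H hcm hH ε V μ₁ hε hV hμ₁
end
end
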